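/- In the Surprise Exam Beth-Kripke model, the teacher's announcement formula φ₀ (exactly one of p₁, p₂, p₃) is satisfied, and additionally (M,s) ⊨ ⟨p₁⟩⊤ ∧ ⟨¬p₁⟩⊤ ∧ ⟨¬p₁⟩⟨p₂⟩⊤ ∧ ⟨¬p₁⟩⟨¬p₂⟩⊤ ∧ ⟨¬p₁⟩⟨¬p₂⟩⟨p₃⟩⊤, yet (M,s) ⊭ p₃ and (M,s) ⊭ ¬p₃. -/

import Mathlib

/-!
The root forces `p₁ ∨ p₂ ∨ p₃` through the bar formed by its three successors, yet it forces
no atom. Indeed every path through a node below a maximal node `x` may be chosen inside `Iic x`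
(a flag through both), so at a maximal node forcing an atom is membership in the valuation, and
the leaves `b`, `c` share no atom. Hence the root forces neither `p₃` nor `¬p₃`, the latter
because the leaf `d` forces `p₃`. Announcing `¬p₁` keeps the leaves `c` and `d`, and announcing
`¬p₂` afterwards still keeps `d`, so every announcement in the chain is executable.
-/

/-- A path through `α`: a maximal chain containing `α`. -/
def IsPath {Q : Type} [PartialOrder Q] (α : Q) (P : Set Q) : Prop :=
  α ∈ P ∧ IsChain (· ≤ ·) P ∧ ∀ P' : Set Q, IsChain (· ≤ ·) P' → P ⊆ P' → P' = P

/-- A bar for `α`: a set meeting every path through `α`. -/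
def IsBar {Q : Type} [PartialOrder Q] (α : Q) (B : Set Q) : Prop :=
  ∀ P : Set Q, IsPath α P → (B ∩ P).Nonempty

/-- Epistemic formulas over agents `Ag` and atoms `At`. -/
inductive EForm (Ag At : Type) : Type
  | atom : At → EForm Ag At
  | and  : EForm Ag At → EForm Ag At → EForm Ag At
  | or   : EForm Ag At → EForm Ag At → EForm Ag At
  | imp  : EForm Ag At → EForm Ag At → EForm Ag At
  | neg  : EForm Ag At → EForm Ag At
  | know : Ag → EForm Ag At → EForm Ag At

/-- A Beth-Kripke model: a set of pointed (rooted) Beth worlds with accessibility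
relations between worlds. -/
structure BK (Ag At : Type) where
  S : Type
  Node : S → Type
  [ord : ∀ s, PartialOrder (Node s)]
  root : ∀ s, Node s
  root_le : ∀ (s : S) (β : Node s), root s ≤ β
  F : ∀ s, Node s → Set At
  F_mono : ∀ {s : S} {a b : Node s}, a ≤ b → F s a ⊆ F s b
  acc : Ag → S → S → Prop

attribute [instance] BK.ord

/-- Epistemic Beth forcing `α ⊩_M φ` at node `α` of world `s`. -/
def BK.force {Ag At : Type} (M : BK Ag At) : EForm Ag At → ∀ s : M.S, M.Node s → Prop
  | .atom p, s, α => ∃ B, IsBar α B ∧ ∀ β ∈ B, p ∈ M.F s β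
  | .and A B, s, α => M.force A s α ∧ M.force B s α
  | .or A B, s, α => ∃ Bb, IsBar α Bb ∧ ∀ β ∈ Bb, M.force A s β ∨ M.force B s β
  | .imp A B, s, α => ∀ β, α ≤ β → M.force A s β → M.force B s β
  | .neg A, s, α => ∀ β, α ≤ β → ¬ M.force A s β
  | .know i A, s, _ => ∀ t, M.acc i s t → ∀ β : M.Node t, M.force A t β

/-- The model `M|_φ` obtained by publicly announcing `φ`: keep only worlds whose
root does not force `¬φ`, and within each world only the nodes not forcing `¬φ`. -/
def BK.announce {Ag At : Type} (M : BK Ag At) (φ : EForm Ag At) : BK Ag At where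
  S := {s : M.S // ¬ M.force (.neg φ) s (M.root s)}
  Node s := {α : M.Node s.1 // ¬ M.force (.neg φ) s.1 α}
  root s := ⟨M.root s.1, s.2⟩
  root_le s β := Subtype.mk_le_mk.mpr (M.root_le s.1 β.1)
  F s α := M.F s.1 α.1
  F_mono h := M.F_mono (Subtype.mk_le_mk.mp h)
  acc i s t := M.acc i s.1 t.1

/-- Four nodes: a root `a` with three incomparable successors `b`, `c`, `d`. -/
inductive N4 : Type
  | a | b | c | d
deriving DecidableEq

instance : PartialOrder N4 where
  le x y := x = y ∨ x = N4.a
  le_refl _ := Or.inl rfl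
  le_trans x y z h1 h2 := by
    rcases h1 with rfl | rfl
    · exact h2
    · exact Or.inr rfl
  le_antisymm x y h1 h2 := by
    rcases h1 with rfl | rfl
    · rfl
    · rcases h2 with rfl | rfl <;> rfl

/-- The Surprise Exam Beth-Kripke model: a single world (one student agent,
reflexive accessibility) whose Beth world has root `a` with empty valuation and
three successors `b`, `c`, `d` making `p₁`, `p₂`, `p₃` (atoms `0`, `1`, `2`)
true respectively. -/
def MSEP : BK Unit (Fin 3) where
  S := Unit
  Node _ := N4
  root _ := N4.a
  root_le _ β := Or.inr rfl
  F _ n := match n with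
    | .a => ∅
    | .b => {0}
    | .c => {1}
    | .d => {2}
  F_mono h := by
    rcases h with rfl | rfl
    · exact fun z hz => hz
    · exact fun z hz => hz.elim
  acc _ _ _ := True

/-- `p₁`: the teacher likes Wednesday. -/
def pw : EForm Unit (Fin 3) := .atom 0
/-- `p₂`: the teacher likes Thursday. -/
def pt : EForm Unit (Fin 3) := .atom 1
/-- `p₃`: the teacher likes Friday. -/
def pf : EForm Unit (Fin 3) := .atom 2

/-- `φ₀`: the teacher likes exactly one of the three days. -/
def phi0 : EForm Unit (Fin 3) :=
  .and (.or pw (.or pt pf))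
    (.and (.neg (.and pw pt)) (.and (.neg (.and pw pf)) (.neg (.and pt pf))))

theorem Flag.isPath {Q : Type} [PartialOrder Q] {α : Q} (s : Flag Q) (hα : α ∈ s) :
    IsPath α s :=
  ⟨hα, s.Chain', fun _ hc hsub => (s.max_chain' hc hsub).symm⟩

theorem isBar_of_mem {Q : Type} [PartialOrder Q] {α : Q} {B : Set Q} (hα : α ∈ B) :
    IsBar α B :=
  fun _ hP => ⟨α, hα, hP.1⟩

theorem isBar_Ioi {Q : Type} [PartialOrder Q] {α : Q} (hα : ¬ IsMax α) :
    IsBar α (Set.Ioi α) := by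
  rintro P ⟨hαP, hchain, hmax⟩
  by_contra hempty
  obtain ⟨γ, hαγ⟩ := not_isMax_iff.mp hα
  have hle : ∀ p ∈ P, p ≤ γ := by
    intro p hp
    rcases eq_or_ne p α with rfl | hpα
    · exact hαγ.le
    rcases hchain hp hαP hpα with hpα' | hαp
    · exact hpα'.trans hαγ.le
    · exact absurd ⟨p, lt_of_le_of_ne hαp hpα.symm, hp⟩ hempty
  have hγP : insert γ P = P :=
    hmax _ (hchain.insert fun p hp _ => Or.inr (hle p hp)) (Set.subset_insert _ _)
  exact hempty ⟨γ, hαγ, hγP ▸ Set.mem_insert _ _⟩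

theorem exists_isPath_subset_Iic {Q : Type} [PartialOrder Q] {α x : Q} (hαx : α ≤ x)
    (hx : IsMax x) : ∃ P, IsPath α P ∧ P ⊆ Set.Iic x := by
  obtain ⟨s, hαs, hxs⟩ := Flag.exists_mem_mem hαx
  refine ⟨s, s.isPath hαs, fun p hp => ?_⟩
  rcases eq_or_ne p x with rfl | hpx
  · exact le_rfl
  · exact (s.Chain' hp hxs hpx).elim id fun hxp => hx hxp

namespace BK

variable {Ag At : Type} (M : BK Ag At) {s : M.S}

theorem force_atom_of_mem {p : At} {α : M.Node s} (h : p ∈ M.F s α) :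
    M.force (.atom p) s α :=
  ⟨{α}, isBar_of_mem rfl, by rintro β rfl; exact h⟩

theorem mem_F_of_force_atom {p : At} {α x : M.Node s} (hαx : α ≤ x) (hx : IsMax x)
    (h : M.force (.atom p) s α) : p ∈ M.F s x := by
  obtain ⟨B, hB, hp⟩ := h
  obtain ⟨P, hP, hPx⟩ := exists_isPath_subset_Iic hαx hx
  obtain ⟨β, hβB, hβP⟩ := hB P hP
  exact M.F_mono (hPx hβP) (hp β hβB)

theorem force_atom_iff_of_isMax {p : At} {x : M.Node s} (hx : IsMax x) :
    M.force (.atom p) s x ↔ p ∈ M.F s x :=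
  ⟨M.mem_F_of_force_atom le_rfl hx, M.force_atom_of_mem⟩

theorem force_or_of_left {A B : EForm Ag At} {α : M.Node s} (h : M.force A s α) :
    M.force (.or A B) s α :=
  ⟨{α}, isBar_of_mem rfl, by rintro β rfl; exact Or.inl h⟩

theorem force_or_of_right {A B : EForm Ag At} {α : M.Node s} (h : M.force B s α) :
    M.force (.or A B) s α :=
  ⟨{α}, isBar_of_mem rfl, by rintro β rfl; exact Or.inr h⟩

theorem not_force_neg_of_le {φ : EForm Ag At} {α β : M.Node s} (hαβ : α ≤ β)
    (h : M.force φ s β) : ¬ M.force (.neg φ) s α :=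
  fun hneg => hneg β hαβ h

theorem force_neg_iff_of_isMax {φ : EForm Ag At} {x : M.Node s} (hx : IsMax x) :
    M.force (.neg φ) s x ↔ ¬ M.force φ s x :=
  ⟨fun h => h x le_rfl, fun h _ hxβ => le_antisymm hxβ (hx hxβ) ▸ h⟩

theorem isMax_announce {φ : EForm Ag At} {s : (M.announce φ).S} {x : M.Node s.1}
    (hx : IsMax x) (hφ : ¬ M.force (.neg φ) s.1 x) :
    IsMax (⟨x, hφ⟩ : (M.announce φ).Node s) :=
  fun _ h => hx h

end BK

namespace N4

theorem a_le (x : N4) : a ≤ x := Or.inr rfl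

theorem isMax_of_ne_a {x : N4} (hx : x ≠ a) : IsMax x := by
  rintro y (rfl | rfl)
  · exact le_rfl
  · exact absurd rfl hx

theorem not_isMax_a : ¬ IsMax a := by
  intro h
  rcases (h (a_le b) : b ≤ a) with h | h <;> cases h

end N4

namespace MSEP

theorem subsingleton_F (β : N4) : (MSEP.F () β).Subsingleton := by
  cases β <;> simp [MSEP]

theorem force_atom_iff {p : Fin 3} {β : N4} : MSEP.force (.atom p) () β ↔ p ∈ MSEP.F () β := by
  rcases eq_or_ne β N4.a with rfl | hβ
  · refine ⟨fun h => ?_, fun h => h.elim⟩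
    have h0 : p = 0 := MSEP.mem_F_of_force_atom (N4.a_le N4.b) (N4.isMax_of_ne_a (by decide)) h
    have h1 : p = 1 := MSEP.mem_F_of_force_atom (N4.a_le N4.c) (N4.isMax_of_ne_a (by decide)) h
    exact absurd (h0.symm.trans h1) (by decide)
  · exact MSEP.force_atom_iff_of_isMax (N4.isMax_of_ne_a hβ)

theorem force_phi0_root : MSEP.force phi0 () (MSEP.root ()) := by
  have hdisj : MSEP.force (.or pw (.or pt pf)) () N4.a := by
    have hbar : IsBar N4.a (Set.Ioi N4.a) := isBar_Ioi N4.not_isMax_a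
    refine ⟨_, hbar, fun β hβ => ?_⟩
    cases β
    · exact (lt_irrefl N4.a hβ).elim
    · exact Or.inl (force_atom_iff.mpr rfl)
    · exact Or.inr (MSEP.force_or_of_left (force_atom_iff.mpr rfl))
    · exact Or.inr (MSEP.force_or_of_right (force_atom_iff.mpr rfl))
  have hexcl {i j : Fin 3} (hij : i ≠ j) :
      MSEP.force (.neg (.and (.atom i) (.atom j))) () N4.a := by
    rintro β - ⟨hi, hj⟩
    exact hij (subsingleton_F β (force_atom_iff.mp hi) (force_atom_iff.mp hj))
  exact ⟨hdisj, hexcl (by decide), hexcl (by decide), hexcl (by decide)⟩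

end MSEP

/-- in the Surprise Exam model, `φ₀` is satisfied; moreover
`(M,s) ⊨ ⟨p₁⟩⊤ ∧ ⟨¬p₁⟩⊤ ∧ ⟨¬p₁⟩⟨p₂⟩⊤ ∧ ⟨¬p₁⟩⟨¬p₂⟩⊤ ∧ ⟨¬p₁⟩⟨¬p₂⟩⟨p₃⟩⊤`
(each announcement step is executable: the relevant root does not force the
negation of the announced formula), yet `(M,s) ⊭ p₃` and `(M,s) ⊭ ¬p₃`. -/
theorem surprise_exam :
    MSEP.force phi0 () (MSEP.root ()) ∧
    -- ⟨p₁⟩⊤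
    ¬ MSEP.force (.neg pw) () (MSEP.root ()) ∧
    -- ⟨¬p₁⟩⊤, and the further announcements after announcing ¬p₁
    (∃ h1 : ¬ MSEP.force (.neg (.neg pw)) () (MSEP.root ()),
      -- ⟨¬p₁⟩⟨p₂⟩⊤
      ¬ (MSEP.announce (.neg pw)).force (.neg pt) ⟨(), h1⟩
          ((MSEP.announce (.neg pw)).root ⟨(), h1⟩) ∧
      -- ⟨¬p₁⟩⟨¬p₂⟩⊤, and then ⟨¬p₁⟩⟨¬p₂⟩⟨p₃⟩⊤
      ∃ h2 : ¬ (MSEP.announce (.neg pw)).force (.neg (.neg pt)) ⟨(), h1⟩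
          ((MSEP.announce (.neg pw)).root ⟨(), h1⟩),
        ¬ ((MSEP.announce (.neg pw)).announce (.neg pt)).force (.neg pf)
            ⟨⟨(), h1⟩, h2⟩
            (((MSEP.announce (.neg pw)).announce (.neg pt)).root ⟨⟨(), h1⟩, h2⟩)) ∧
    -- (M,s) ⊭ p₃ and (M,s) ⊭ ¬p₃
    ¬ MSEP.force pf () (MSEP.root ()) ∧
    ¬ MSEP.force (.neg pf) () (MSEP.root ()) := by
  have negpw_leaf {x : N4} (hx : x ≠ N4.a) (h0 : (0 : Fin 3) ∉ MSEP.F () x) :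
      MSEP.force (.neg pw) () x :=
    (MSEP.force_neg_iff_of_isMax (N4.isMax_of_ne_a hx)).mpr fun h =>
      h0 (MSEP.force_atom_iff.mp h)
  have negpw_c := negpw_leaf (x := N4.c) (by decide) (by simp [MSEP])
  have negpw_d := negpw_leaf (x := N4.d) (by decide) (by simp [MSEP])
  have h1 : ¬ MSEP.force (.neg (.neg pw)) () (MSEP.root ()) :=
    MSEP.not_force_neg_of_le (N4.a_le N4.c) negpw_c
  have hc := MSEP.not_force_neg_of_le le_rfl negpw_c
  have hd := MSEP.not_force_neg_of_le le_rfl negpw_d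
  set M₁ := MSEP.announce (.neg pw)
  have hd_max : IsMax (⟨N4.d, hd⟩ : M₁.Node ⟨(), h1⟩) :=
    MSEP.isMax_announce (N4.isMax_of_ne_a (by decide)) hd
  have negpt_d : M₁.force (.neg pt) ⟨(), h1⟩ ⟨N4.d, hd⟩ :=
    (M₁.force_neg_iff_of_isMax hd_max).mpr fun h =>
      absurd ((M₁.force_atom_iff_of_isMax hd_max).mp h) (by simp [M₁, BK.announce, MSEP])
  have h2 : ¬ M₁.force (.neg (.neg pt)) ⟨(), h1⟩ (M₁.root ⟨(), h1⟩) :=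
    M₁.not_force_neg_of_le (β := ⟨N4.d, hd⟩) (N4.a_le N4.d) negpt_d
  refine ⟨MSEP.force_phi0_root,
    MSEP.not_force_neg_of_le (N4.a_le N4.b) (MSEP.force_atom_iff.mpr rfl),
    ⟨h1, M₁.not_force_neg_of_le (β := ⟨N4.c, hc⟩) (N4.a_le N4.c) (M₁.force_atom_of_mem rfl),
      h2, (M₁.announce (.neg pt)).not_force_neg_of_le
        (β := ⟨⟨N4.d, hd⟩, M₁.not_force_neg_of_le le_rfl negpt_d⟩) (N4.a_le N4.d)
        (BK.force_atom_of_mem _ rfl)⟩,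
    MSEP.force_atom_iff.mp,
    MSEP.not_force_neg_of_le (N4.a_le N4.d) (MSEP.force_atom_iff.mpr rfl)⟩
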